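/- Let 0 < ξ₊ < ∞ and let q : (0, ξ₊) → ℝ be continuous. Suppose η, φ ∈ C²((0, ξ₊)) satisfy: η > 0 and φ > 0 on (0, ξ₊); f := -η'' + qη > 0 on (0, ξ₊); -φ'' + qφ = λφ on (0, ξ₊) for some λ ∈ ℝ; the products φη and φf are Lebesgue integrable on (0, ξ₊); and the Wronskian φ'η - φη' tends to 0 as ξ → 0⁺ and as ξ → ξ₊⁻. Then λ > 0. -/

import Mathlib

open Real MeasureTheory Set Filter Topology

/-!
The Wronskian `W = φ'η - φη'` satisfies the Lagrange identity
`W' = φ (-η'' + qη) - λ φη`, because `φ'' = (q - λ) φ`. Integrating over `(0, ξ₊)`, where `W`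
vanishes at both ends, gives `∫ φ f = λ ∫ φ η`. Both integrands are positive, so `λ > 0`.
-/

theorem ContDiffOn.hasDerivAt_deriv_of_isOpen {𝕜 F : Type*} [NontriviallyNormedField 𝕜]
    [NormedAddCommGroup F] [NormedSpace 𝕜 F] {f : 𝕜 → F} {s : Set 𝕜} {x : 𝕜}
    (hf : ContDiffOn 𝕜 2 f s) (hs : IsOpen s) (hx : x ∈ s) :
    HasDerivAt (deriv f) (deriv (deriv f) x) x :=
  (((hf.deriv_of_isOpen hs le_rfl).contDiffAt (hs.mem_nhds hx)).differentiableAt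
    one_ne_zero).hasDerivAt

theorem hasDerivAt_wronskian {f g f' g' : ℝ → ℝ} {f'' g'' x : ℝ}
    (hf : HasDerivAt f (f' x) x) (hf' : HasDerivAt f' f'' x)
    (hg : HasDerivAt g (g' x) x) (hg' : HasDerivAt g' g'' x) :
    HasDerivAt (fun ξ => f' ξ * g ξ - f ξ * g' ξ) (f'' * g x - f x * g'') x :=
  ((hf'.mul hg).sub (hf.mul hg')).congr_deriv (by ring)

theorem integral_mul_eq_add_of_wronskian_tendsto {a b lam Wa Wb : ℝ} {q η φ : ℝ → ℝ}
    (hab : a < b) (hη : ContDiffOn ℝ 2 η (Ioo a b)) (hφ : ContDiffOn ℝ 2 φ (Ioo a b))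
    (heig : ∀ ξ ∈ Ioo a b, -(deriv (deriv φ) ξ) + q ξ * φ ξ = lam * φ ξ)
    (hint₁ : IntervalIntegrable (fun ξ => φ ξ * η ξ) volume a b)
    (hint₂ : IntervalIntegrable (fun ξ => φ ξ * (-(deriv (deriv η) ξ) + q ξ * η ξ)) volume a b)
    (hWa : Tendsto (fun ξ => deriv φ ξ * η ξ - φ ξ * deriv η ξ) (𝓝[>] a) (𝓝 Wa))
    (hWb : Tendsto (fun ξ => deriv φ ξ * η ξ - φ ξ * deriv η ξ) (𝓝[<] b) (𝓝 Wb)) :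
    ∫ ξ in a..b, φ ξ * (-(deriv (deriv η) ξ) + q ξ * η ξ) =
      lam * (∫ ξ in a..b, φ ξ * η ξ) + (Wb - Wa) := by
  have hderiv : ∀ ξ ∈ Ioo a b, HasDerivAt (fun ξ => deriv φ ξ * η ξ - φ ξ * deriv η ξ)
      (φ ξ * (-(deriv (deriv η) ξ) + q ξ * η ξ) - lam * (φ ξ * η ξ)) ξ := by
    intro ξ hξ
    have hd (f : ℝ → ℝ) (hf : ContDiffOn ℝ 2 f (Ioo a b)) : HasDerivAt f (deriv f ξ) ξ :=
      ((hf.contDiffAt (isOpen_Ioo.mem_nhds hξ)).differentiableAt two_ne_zero).hasDerivAt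
    convert hasDerivAt_wronskian (hd φ hφ) (hφ.hasDerivAt_deriv_of_isOpen isOpen_Ioo hξ)
      (hd η hη) (hη.hasDerivAt_deriv_of_isOpen isOpen_Ioo hξ) using 1
    linear_combination η ξ * heig ξ hξ
  have hFTC := intervalIntegral.integral_eq_sub_of_hasDerivAt_of_tendsto hab hderiv
    (hint₂.sub (hint₁.const_mul lam)) hWa hWb
  rw [intervalIntegral.integral_sub hint₂ (hint₁.const_mul lam),
    intervalIntegral.integral_const_mul] at hFTC
  linear_combination hFTC

theorem eigenvalue_positive
    (ξp lam : ℝ) (q η φ : ℝ → ℝ) (hξ : 0 < ξp)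
    (hη : ContDiffOn ℝ 2 η (Ioo 0 ξp)) (hφ : ContDiffOn ℝ 2 φ (Ioo 0 ξp))
    (hηpos : ∀ ξ ∈ Ioo 0 ξp, 0 < η ξ) (hφpos : ∀ ξ ∈ Ioo 0 ξp, 0 < φ ξ)
    (hf : ∀ ξ ∈ Ioo 0 ξp, 0 < -(deriv (deriv η) ξ) + q ξ * η ξ)
    (heig : ∀ ξ ∈ Ioo 0 ξp, -(deriv (deriv φ) ξ) + q ξ * φ ξ = lam * φ ξ)
    (hint1 : IntegrableOn (fun ξ => φ ξ * η ξ) (Ioo 0 ξp))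
    (hint2 : IntegrableOn
      (fun ξ => φ ξ * (-(deriv (deriv η) ξ) + q ξ * η ξ)) (Ioo 0 ξp))
    (hw0 : Tendsto (fun ξ => deriv φ ξ * η ξ - φ ξ * deriv η ξ) (𝓝[>] 0) (𝓝 0))
    (hw1 : Tendsto (fun ξ => deriv φ ξ * η ξ - φ ξ * deriv η ξ) (𝓝[<] ξp) (𝓝 0)) :
    0 < lam := by
  have hint1' := (intervalIntegrable_iff_integrableOn_Ioo_of_le hξ.le).2 hint1
  have hint2' := (intervalIntegrable_iff_integrableOn_Ioo_of_le hξ.le).2 hint2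
  have hgreen := integral_mul_eq_add_of_wronskian_tendsto hξ hη hφ heig hint1' hint2' hw0 hw1
  have hφη : 0 < ∫ ξ in 0..ξp, φ ξ * η ξ :=
    intervalIntegral.intervalIntegral_pos_of_pos_on hint1'
      (fun ξ hξ' => mul_pos (hφpos ξ hξ') (hηpos ξ hξ')) hξ
  have hφf : 0 < ∫ ξ in 0..ξp, φ ξ * (-(deriv (deriv η) ξ) + q ξ * η ξ) :=
    intervalIntegral.intervalIntegral_pos_of_pos_on hint2'
      (fun ξ hξ' => mul_pos (hφpos ξ hξ') (hf ξ hξ')) hξ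
  exact pos_of_mul_pos_left (by linarith) hφη.le
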